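/- arXiv:2312.09373 — 3 statements merged into one kernel-verified Lean document; each statement's English description precedes it below -/
import Mathlib

section
/- Let c : I → ℝ² be a regular arc-length parametrized plane curve with curvature κ and Frenet normal n, and let β : I → (-π/2, π/2) be smooth with κ(t) + β'(t) ≠ 0. Then the envelope of the lines through c(t) in direction R(β(t))·n(t) (the normals of c rotated by angle β(t)), called the β-evolute of c, is given by c₊(t) = c(t) + (cos β(t)/(κ(t) + β'(t)))·R(β(t))·n(t), where R(β) is the rotation matrix by angle β. -/
open Real

/-- Rotation of the plane by angle `β`. -/
noncomputable def vrot (β : ℝ) (v : ℝ × ℝ) : ℝ × ℝ :=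
  (Real.cos β * v.1 - Real.sin β * v.2, Real.sin β * v.1 + Real.cos β * v.2)

/-- Euclidean norm on `ℝ × ℝ`. -/
noncomputable def vnorm (v : ℝ × ℝ) : ℝ := Real.sqrt (v.1 ^ 2 + v.2 ^ 2)

lemma key1 (a b u v k p F' : ℝ) (hab : b^2 + a^2 = 1) (hg : k + p ≠ 0) :
    u + (F' * (-(a*v) - b*u) + a/(k+p) * (-((-b*p)*v + a*(k*u)) - ((a*p)*u + b*(-(k*v)))))
      = (F' - b) * (-(a*v) - b*u) := by
  field_simp
  linear_combination (-(u*(k+p))) * hab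

lemma key2 (a b u v k p F' : ℝ) (hab : b^2 + a^2 = 1) (hg : k + p ≠ 0) :
    v + (F' * (a*u - b*v) + a/(k+p) * ((-b*p)*u + a*(-(k*v)) - ((a*p)*v + b*(k*u))))
      = (F' - b) * (a*u - b*v) := by
  field_simp
  linear_combination (-(v*(k+p))) * hab

set_option maxHeartbeats 1000000 in
/-- The β-evolute `e t = c t + (cos β/(κ+β')) • R(β) n t` of a regular arc-length
parametrized curve `c` is the envelope of the rotated normals: its derivative is
parallel to the rotated normal direction `R(β(t)) n(t)`. -/
theorem beta_evolute_formula
    (c : ℝ → ℝ × ℝ) (κ β : ℝ → ℝ)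
    (hc : ContDiff ℝ (⊤ : ℕ∞) c) (hβ : ContDiff ℝ (⊤ : ℕ∞) β) (hκ : ContDiff ℝ (⊤ : ℕ∞) κ)
    (harc : ∀ t, vnorm (deriv c t) = 1)
    (hβrange : ∀ t, β t ∈ Set.Ioo (-(π / 2)) (π / 2))
    (n : ℝ → ℝ × ℝ) (hn : ∀ t, n t = vrot (π / 2) (deriv c t))
    (hfrenet : ∀ t, deriv (deriv c) t = κ t • n t)
    (hreg : ∀ t, κ t + deriv β t ≠ 0)
    (e : ℝ → ℝ × ℝ)
    (he : ∀ t, e t = c t + (Real.cos (β t) / (κ t + deriv β t)) • vrot (β t) (n t)) :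
    ∀ t, (∃ lam : ℝ, e t = c t + lam • vrot (β t) (n t)) ∧
      ∃ μ : ℝ, deriv e t = μ • vrot (β t) (n t) := by
  intro t
  refine ⟨⟨_, he t⟩, ?_⟩
  have hcd : Differentiable ℝ (deriv c) := by
    have h2 : ContDiff ℝ ((1 : WithTop ℕ∞) + 1) c := hc.of_le (by exact WithTop.coe_le_coe.mpr le_top)
    exact ((contDiff_succ_iff_deriv.mp h2).2.2).differentiable one_ne_zero
  have hβd : Differentiable ℝ (deriv β) := by
    have h2 : ContDiff ℝ ((1 : WithTop ℕ∞) + 1) β := hβ.of_le (by exact WithTop.coe_le_coe.mpr le_top)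
    exact ((contDiff_succ_iff_deriv.mp h2).2.2).differentiable one_ne_zero
  have hn' : ∀ s, n s = (-(deriv c s).2, (deriv c s).1) := by
    intro s; rw [hn]; simp [vrot]
  have hd2 : HasDerivAt (deriv c) (κ t • n t) t := by
    have := (hcd t).hasDerivAt
    rwa [hfrenet t] at this
  have hu : HasDerivAt (fun r => (deriv c r).1) (-(κ t * (deriv c t).2)) t := by
    exact ((hasFDerivAt_fst (p := deriv c t)).comp_hasDerivAt t hd2).congr_deriv
      (by simp [hn' t, mul_neg])
  have hv : HasDerivAt (fun r => (deriv c r).2) (κ t * (deriv c t).1) t := by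
    exact ((hasFDerivAt_snd (p := deriv c t)).comp_hasDerivAt t hd2).congr_deriv
      (by simp [hn' t])
  have hx : HasDerivAt (fun r => (c r).1) ((deriv c t).1) t :=
    ((hc.differentiable (by simp)) t).hasDerivAt.fst
  have hy : HasDerivAt (fun r => (c r).2) ((deriv c t).2) t :=
    ((hc.differentiable (by simp)) t).hasDerivAt.snd
  have hbd : HasDerivAt β (deriv β t) t := ((hβ.differentiable (by simp)) t).hasDerivAt
  have hbd2 : HasDerivAt (deriv β) (deriv (deriv β) t) t :=
    (hβd t).hasDerivAt
  have hkd : HasDerivAt κ (deriv κ t) t := ((hκ.differentiable (by simp)) t).hasDerivAt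
  have hcos : HasDerivAt (fun s => Real.cos (β s)) (-Real.sin (β t) * deriv β t) t :=
    (Real.hasDerivAt_cos (β t)).comp t hbd
  have hsin : HasDerivAt (fun s => Real.sin (β s)) (Real.cos (β t) * deriv β t) t :=
    (Real.hasDerivAt_sin (β t)).comp t hbd
  have hden : HasDerivAt (fun s => κ s + deriv β s) (deriv κ t + deriv (deriv β) t) t :=
    hkd.add hbd2
  have hF : HasDerivAt (fun s => Real.cos (β s) / (κ s + deriv β s))
      ((-Real.sin (β t) * deriv β t * (κ t + deriv β t) -
        Real.cos (β t) * (deriv κ t + deriv (deriv β) t)) / (κ t + deriv β t) ^ 2) t :=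
    hcos.div hden (hreg t)
  have hN1 : HasDerivAt
      (fun s => -(Real.cos (β s) * (deriv c s).2) - Real.sin (β s) * (deriv c s).1)
      (-((-Real.sin (β t) * deriv β t) * (deriv c t).2 +
          Real.cos (β t) * (κ t * (deriv c t).1)) -
        ((Real.cos (β t) * deriv β t) * (deriv c t).1 +
          Real.sin (β t) * (-(κ t * (deriv c t).2)))) t :=
    ((hcos.mul hv).neg).sub (hsin.mul hu)
  have hN2 : HasDerivAt
      (fun s => Real.cos (β s) * (deriv c s).1 - Real.sin (β s) * (deriv c s).2)
      (((-Real.sin (β t) * deriv β t) * (deriv c t).1 +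
          Real.cos (β t) * (-(κ t * (deriv c t).2))) -
        ((Real.cos (β t) * deriv β t) * (deriv c t).2 +
          Real.sin (β t) * (κ t * (deriv c t).1))) t :=
    (hcos.mul hu).sub (hsin.mul hv)
  have hE1 := hx.add (hF.mul hN1)
  have hE2 := hy.add (hF.mul hN2)
  have hE := hE1.prodMk hE2
  have he' : e = fun s =>
      ((c s).1 + (Real.cos (β s) / (κ s + deriv β s)) *
        (-(Real.cos (β s) * (deriv c s).2) - Real.sin (β s) * (deriv c s).1),
       (c s).2 + (Real.cos (β s) / (κ s + deriv β s)) *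
        (Real.cos (β s) * (deriv c s).1 - Real.sin (β s) * (deriv c s).2)) := by
    funext s
    rw [he s, hn' s]
    refine Prod.ext ?_ ?_ <;>
      simp only [vrot, Prod.fst_add, Prod.snd_add, Prod.smul_mk, smul_eq_mul] <;> ring
  refine ⟨(-Real.sin (β t) * deriv β t * (κ t + deriv β t) -
        Real.cos (β t) * (deriv κ t + deriv (deriv β) t)) / (κ t + deriv β t) ^ 2 -
      Real.sin (β t), ?_⟩
  rw [he']
  erw [hE.deriv]
  rw [hn' t]
  refine Prod.ext ?_ ?_ <;>
    simp only [vrot, Prod.smul_mk, smul_eq_mul]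
  · linear_combination key1 (Real.cos (β t)) (Real.sin (β t)) (deriv c t).1 (deriv c t).2
      (κ t) (deriv β t)
      ((-Real.sin (β t) * deriv β t * (κ t + deriv β t) -
        Real.cos (β t) * (deriv κ t + deriv (deriv β) t)) / (κ t + deriv β t) ^ 2)
      (Real.sin_sq_add_cos_sq (β t)) (hreg t)
  · linear_combination key2 (Real.cos (β t)) (Real.sin (β t)) (deriv c t).1 (deriv c t).2
      (κ t) (deriv β t)
      ((-Real.sin (β t) * deriv β t * (κ t + deriv β t) -
        Real.cos (β t) * (deriv κ t + deriv (deriv β) t)) / (κ t + deriv β t) ^ 2)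
      (Real.sin_sq_add_cos_sq (β t)) (hreg t)
end

section
/- Let c : I → ℝ² be a regular smooth curve (not necessarily arc-length parametrized) with curvature κ, and β : I → (-π/2, π/2) smooth. Define ξ(t) = exp(∫₀ᵗ κ(w) tan(β(w)) dw). Then for each constant d, the curve c*_d(t) = c(t) − ξ(t)·(∫₀ᵗ |c'(w)|/ξ(w) dw + d)·(c'(t)/|c'(t)|) has the property that the tangent line of c at c(t) meets c*_d at c*_d(t), and the angle between c'(t) and the normal of c*_d at c*_d(t) equals β(t). In particular λ(t) = ξ(t)(∫₀ᵗ |c'|/ξ dw + d) solves the linear ODE λ' − λ κ tan(β) = |c'| with λ(0) = d. -/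
open Real

/-- Euclidean dot product on `ℝ × ℝ`. -/
def vdot (v w : ℝ × ℝ) : ℝ := v.1 * w.1 + v.2 * w.2

lemma vnorm_nonneg (v : ℝ × ℝ) : 0 ≤ vnorm v := Real.sqrt_nonneg _

lemma vnorm_sq (v : ℝ × ℝ) : vnorm v ^ 2 = v.1 ^ 2 + v.2 ^ 2 :=
  Real.sq_sqrt (by positivity)

lemma vnorm_pos {v : ℝ × ℝ} (h : v ≠ 0) : 0 < vnorm v := by
  apply Real.sqrt_pos.mpr
  rcases (by simpa [Prod.ext_iff] using h : ¬(v.1 = 0 ∧ v.2 = 0)) with h'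
  rcases Classical.em (v.1 = 0) with h1 | h1
  · have h2 : v.2 ≠ 0 := fun h2 => h' ⟨h1, h2⟩
    positivity
  · positivity

lemma vnorm_continuous : Continuous vnorm := by
  unfold vnorm
  exact ((continuous_fst.pow 2).add (continuous_snd.pow 2)).sqrt

lemma hd_fst {u : ℝ → ℝ × ℝ} {v : ℝ × ℝ} {t : ℝ} (h : HasDerivAt u v t) :
    HasDerivAt (fun s => (u s).1) v.1 t := by
  simpa using (h.hasFDerivAt.fst).hasDerivAt

lemma hd_snd {u : ℝ → ℝ × ℝ} {v : ℝ × ℝ} {t : ℝ} (h : HasDerivAt u v t) :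
    HasDerivAt (fun s => (u s).2) v.2 t := by
  simpa using (h.hasFDerivAt.snd).hasDerivAt

lemma key_calc (u1 u2 a1 a2 n l k cb sb tb T1 T2 w1 w2 : ℝ)
    (hn : 0 < n) (hcb : 0 < cb) (hk : 0 ≤ k)
    (hn2 : n ^ 2 = u1 ^ 2 + u2 ^ 2)
    (hT1 : T1 = 1 / n * a1 - (a1 * u1 + a2 * u2) / n ^ 3 * u1)
    (hT2 : T2 = 1 / n * a2 - (a1 * u1 + a2 * u2) / n ^ 3 * u2)
    (hk2 : k ^ 2 = T1 ^ 2 + T2 ^ 2)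
    (hpy : sb ^ 2 + cb ^ 2 = 1)
    (htb : tb = sb / cb)
    (hw1 : w1 = -(l * (k * tb)) * (u1 / n) - l * T1)
    (hw2 : w2 = -(l * (k * tb)) * (u2 / n) - l * T2) :
    |u1 * (-w2) + u2 * w1| = n * Real.sqrt (w1 ^ 2 + w2 ^ 2) * cb := by
  have hn' : n ≠ 0 := hn.ne'
  have hcb' : cb ≠ 0 := hcb.ne'
  have hdot : u1 * T1 + u2 * T2 = 0 := by
    rw [hT1, hT2]; field_simp; linear_combination (a1 * u1 + a2 * u2) * hn2
  have hcross : (u1 * T2 - u2 * T1) ^ 2 = (n * k) ^ 2 := by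
    rw [mul_pow, hn2, hk2]; linear_combination -(u1 * T1 + u2 * T2) * hdot
  have hLHS : u1 * (-w2) + u2 * w1 = l * (u1 * T2 - u2 * T1) := by
    rw [hw1, hw2]; ring
  have habs : |u1 * (-w2) + u2 * w1| = |l| * (n * k) := by
    rw [hLHS, abs_mul]
    congr 1
    have h0 : 0 ≤ n * k := mul_nonneg hn.le hk
    rw [← Real.sqrt_sq_eq_abs, hcross, Real.sqrt_sq h0]
  have hval : w1 ^ 2 + w2 ^ 2 = (|l| * k / cb) ^ 2 := by
    have e1 : w1 ^ 2 + w2 ^ 2 =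
        l ^ 2 * ((k * tb) ^ 2 * (u1 ^ 2 + u2 ^ 2) / n ^ 2 +
          2 * (k * tb) * (u1 * T1 + u2 * T2) / n + (T1 ^ 2 + T2 ^ 2)) := by
      rw [hw1, hw2]; field_simp; ring
    rw [e1, hdot, ← hn2, ← hk2, htb]
    have h2 : (|l| * k / cb) ^ 2 = l ^ 2 * k ^ 2 / cb ^ 2 := by
      rw [div_pow, mul_pow, sq_abs]
    rw [h2]
    field_simp
    linear_combination l ^ 2 * k ^ 2 * n * hpy
  rw [habs, hval, Real.sqrt_sq (by positivity)]
  field_simp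

/-- The β-involute `c*_d = c − ξ(∫|c'|/ξ + d)·c'/|c'|` of a regular plane curve `c`:
the tangent line of `c` at `c(t)` meets `c*_d` at `c*_d(t)`, the (unoriented) angle
between `c'(t)` and the normal of `c*_d` at `c*_d(t)` equals `β(t)`, and
`λ(t) = ξ(t)(∫₀ᵗ |c'|/ξ + d)` solves `λ' − λκ tan β = |c'|` with `λ(0) = d`. -/
theorem beta_involute_property
    (c : ℝ → ℝ × ℝ) (κ β : ℝ → ℝ) (d : ℝ)
    (hc : ContDiff ℝ (⊤ : ℕ∞) c) (hβ : ContDiff ℝ (⊤ : ℕ∞) β)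
    (hreg : ∀ t, deriv c t ≠ 0)
    (hβrange : ∀ t, β t ∈ Set.Ioo (-(π / 2)) (π / 2))
    (hκ : ∀ t, κ t = vnorm ((1 / vnorm (deriv c t)) • deriv (deriv c) t -
        (vdot (deriv (deriv c) t) (deriv c t) / (vnorm (deriv c t)) ^ 3) • deriv c t))
    (ξ lam : ℝ → ℝ)
    (hξ : ∀ t, ξ t = Real.exp (∫ w in (0:ℝ)..t, κ w * Real.tan (β w)))
    (hlam : ∀ t, lam t = ξ t * ((∫ w in (0:ℝ)..t, vnorm (deriv c w) / ξ w) + d))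
    (γ : ℝ → ℝ × ℝ)
    (hγ : ∀ t, γ t = c t - lam t • ((1 / vnorm (deriv c t)) • deriv c t)) :
    (∀ t, ∃ μ : ℝ, γ t - c t = μ • deriv c t) ∧
    (∀ t, |vdot (deriv c t) (vrot (π / 2) (deriv γ t))| =
        vnorm (deriv c t) * vnorm (deriv γ t) * Real.cos (β t)) ∧
    (lam 0 = d ∧
      ∀ t, HasDerivAt lam (lam t * (κ t * Real.tan (β t)) + vnorm (deriv c t)) t) := by
  have hc9 : ContDiff ℝ (⊤ : ℕ∞) c := hc.of_le (by simp)
  obtain ⟨hcdiff, hcd⟩ := contDiff_infty_iff_deriv.mp hc9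
  obtain ⟨hudiff, hud⟩ := contDiff_infty_iff_deriv.mp hcd
  have hccont : Continuous (deriv c) := hcd.continuous
  have hacont : Continuous (deriv (deriv c)) := hud.continuous
  have hcder : ∀ t, HasDerivAt c (deriv c t) t := fun t => (hcdiff t).hasDerivAt
  have huder : ∀ t, HasDerivAt (deriv c) (deriv (deriv c) t) t := fun t => (hudiff t).hasDerivAt
  have hnpos : ∀ t, 0 < vnorm (deriv c t) := fun t => vnorm_pos (hreg t)
  have hncont : Continuous fun s => vnorm (deriv c s) := vnorm_continuous.comp hccont
  have hn' : ∀ t, HasDerivAt (fun s => vnorm (deriv c s))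
      (vdot (deriv c t) (deriv (deriv c) t) / vnorm (deriv c t)) t := by
    intro t
    have hq : HasDerivAt (fun s => ((deriv c s).1 ^ 2 + (deriv c s).2 ^ 2))
        (2 * (deriv c t).1 * (deriv (deriv c) t).1 +
          2 * (deriv c t).2 * (deriv (deriv c) t).2) t := by
      have h3 := ((hd_fst (huder t)).pow 2).add ((hd_snd (huder t)).pow 2)
      refine h3.congr_deriv ?_
      push_cast
      ring
    have hqpos : (0:ℝ) < ((deriv c t).1 ^ 2 + (deriv c t).2 ^ 2) := by
      have h1 := hnpos t
      have h2 := vnorm_sq (deriv c t)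
      nlinarith
    have h2 := hq.sqrt hqpos.ne'
    have h3 : vdot (deriv c t) (deriv (deriv c) t) / vnorm (deriv c t) =
        (2 * (deriv c t).1 * (deriv (deriv c) t).1 +
          2 * (deriv c t).2 * (deriv (deriv c) t).2) /
          (2 * Real.sqrt ((deriv c t).1 ^ 2 + (deriv c t).2 ^ 2)) := by
      rw [show Real.sqrt ((deriv c t).1 ^ 2 + (deriv c t).2 ^ 2) = vnorm (deriv c t) from rfl]
      have hne := (hnpos t).ne'
      field_simp [vdot]
      unfold vdot
      ring
    rw [h3]
    exact h2
  have hκc : Continuous κ := by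
    have hfun : κ = fun t => vnorm ((1 / vnorm (deriv c t)) • deriv (deriv c) t -
        (vdot (deriv (deriv c) t) (deriv c t) / (vnorm (deriv c t)) ^ 3) • deriv c t) :=
      funext hκ
    rw [hfun]
    apply vnorm_continuous.comp
    apply Continuous.sub
    · exact (continuous_const.div hncont fun t => (hnpos t).ne').smul hacont
    · refine Continuous.smul (Continuous.div ?_ (hncont.pow 3)
        fun t => pow_ne_zero 3 (hnpos t).ne') hccont
      simp only [vdot]
      exact ((continuous_fst.comp hacont).mul (continuous_fst.comp hccont)).add
        ((continuous_snd.comp hacont).mul (continuous_snd.comp hccont))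
  have hκnn : ∀ t, 0 ≤ κ t := fun t => (hκ t) ▸ vnorm_nonneg _
  have hcbpos : ∀ t, 0 < Real.cos (β t) := fun t => Real.cos_pos_of_mem_Ioo (hβrange t)
  have htanc : Continuous fun t => Real.tan (β t) := by
    have hfun : (fun t => Real.tan (β t)) = fun t => Real.sin (β t) / Real.cos (β t) := by
      funext t; rw [Real.tan_eq_sin_div_cos]
    rw [hfun]
    exact (Real.continuous_sin.comp hβ.continuous).div
      (Real.continuous_cos.comp hβ.continuous) fun t => (hcbpos t).ne'
  have hξpos : ∀ t, 0 < ξ t := fun t => (hξ t) ▸ Real.exp_pos _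
  have hξder : ∀ t, HasDerivAt ξ (ξ t * (κ t * Real.tan (β t))) t := by
    intro t
    have hint : HasDerivAt (fun s => ∫ w in (0:ℝ)..s, κ w * Real.tan (β w))
        (κ t * Real.tan (β t)) t :=
      ((hκc.mul htanc).integral_hasStrictDerivAt 0 t).hasDerivAt
    have h2 := hint.exp
    have hfun : ξ = fun s => Real.exp (∫ w in (0:ℝ)..s, κ w * Real.tan (β w)) := funext hξ
    rw [hfun]
    simpa using h2
  have hξcont : Continuous ξ := by
    have hdiff : Differentiable ℝ ξ := fun t => (hξder t).differentiableAt
    exact hdiff.continuous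
  have hlamder : ∀ t, HasDerivAt lam (lam t * (κ t * Real.tan (β t)) + vnorm (deriv c t)) t := by
    intro t
    have hG : HasDerivAt (fun s => ∫ w in (0:ℝ)..s, vnorm (deriv c w) / ξ w)
        (vnorm (deriv c t) / ξ t) t :=
      ((hncont.div hξcont fun s => (hξpos s).ne').integral_hasStrictDerivAt 0 t).hasDerivAt
    have h2 := (hξder t).mul (hG.add_const d)
    have hfun : lam = fun s => ξ s * ((∫ w in (0:ℝ)..s, vnorm (deriv c w) / ξ w) + d) :=
      funext hlam
    rw [hfun]
    refine h2.congr_deriv ?_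
    have hξne := (hξpos t).ne'
    field_simp
  have hlam0 : lam 0 = d := by
    rw [hlam 0, hξ 0]
    simp
  refine ⟨?_, ?_, hlam0, hlamder⟩
  · intro t
    refine ⟨-(lam t / vnorm (deriv c t)), ?_⟩
    rw [hγ t, smul_smul, sub_sub_cancel_left, ← neg_smul]
    congr 1
    ring
  · intro t
    have hne : vnorm (deriv c t) ≠ 0 := (hnpos t).ne'
    have hinv : HasDerivAt (fun s => 1 / vnorm (deriv c s))
        (-(vdot (deriv c t) (deriv (deriv c) t)) / vnorm (deriv c t) ^ 3) t := by
      have h2 := (hasDerivAt_const t (1:ℝ)).div (hn' t) hne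
      refine h2.congr_deriv ?_
      field_simp
      ring
    have hT : HasDerivAt (fun s => (1 / vnorm (deriv c s)) • deriv c s)
        ((1 / vnorm (deriv c t)) • deriv (deriv c) t +
          (-(vdot (deriv c t) (deriv (deriv c) t)) / vnorm (deriv c t) ^ 3) • deriv c t) t :=
      hinv.smul (huder t)
    have hγd : HasDerivAt γ
        (deriv c t - (lam t • ((1 / vnorm (deriv c t)) • deriv (deriv c) t +
            (-(vdot (deriv c t) (deriv (deriv c) t)) / vnorm (deriv c t) ^ 3) • deriv c t) +
          (lam t * (κ t * Real.tan (β t)) + vnorm (deriv c t)) •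
            ((1 / vnorm (deriv c t)) • deriv c t))) t := by
      have hfun : γ = fun s => c s - lam s • ((1 / vnorm (deriv c s)) • deriv c s) := funext hγ
      rw [hfun]
      exact (hcder t).sub ((hlamder t).smul hT)
    have hd := hγd.deriv
    have hpy : Real.sin (β t) ^ 2 + Real.cos (β t) ^ 2 = 1 := Real.sin_sq_add_cos_sq _
    have htb : Real.tan (β t) = Real.sin (β t) / Real.cos (β t) := Real.tan_eq_sin_div_cos _
    have hn2 : vnorm (deriv c t) ^ 2 = (deriv c t).1 ^ 2 + (deriv c t).2 ^ 2 := vnorm_sq _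
    have hk2 : κ t ^ 2 =
        (1 / vnorm (deriv c t) * (deriv (deriv c) t).1 -
          ((deriv (deriv c) t).1 * (deriv c t).1 + (deriv (deriv c) t).2 * (deriv c t).2) /
            vnorm (deriv c t) ^ 3 * (deriv c t).1) ^ 2 +
        (1 / vnorm (deriv c t) * (deriv (deriv c) t).2 -
          ((deriv (deriv c) t).1 * (deriv c t).1 + (deriv (deriv c) t).2 * (deriv c t).2) /
            vnorm (deriv c t) ^ 3 * (deriv c t).2) ^ 2 := by
      rw [hκ t, vnorm_sq]
      simp only [Prod.fst_sub, Prod.snd_sub, Prod.smul_fst, Prod.smul_snd, smul_eq_mul, vdot]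
    have hw1 : (deriv γ t).1 =
        -(lam t * (κ t * Real.tan (β t))) * ((deriv c t).1 / vnorm (deriv c t)) -
          lam t * (1 / vnorm (deriv c t) * (deriv (deriv c) t).1 -
            ((deriv (deriv c) t).1 * (deriv c t).1 + (deriv (deriv c) t).2 * (deriv c t).2) /
              vnorm (deriv c t) ^ 3 * (deriv c t).1) := by
      rw [hd]
      simp only [Prod.fst_sub, Prod.fst_add, Prod.smul_fst, smul_eq_mul, vdot]
      field_simp
      ring
    have hw2 : (deriv γ t).2 =
        -(lam t * (κ t * Real.tan (β t))) * ((deriv c t).2 / vnorm (deriv c t)) -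
          lam t * (1 / vnorm (deriv c t) * (deriv (deriv c) t).2 -
            ((deriv (deriv c) t).1 * (deriv c t).1 + (deriv (deriv c) t).2 * (deriv c t).2) /
              vnorm (deriv c t) ^ 3 * (deriv c t).2) := by
      rw [hd]
      simp only [Prod.snd_sub, Prod.snd_add, Prod.smul_snd, smul_eq_mul, vdot]
      field_simp
      ring
    have key := key_calc (deriv c t).1 (deriv c t).2 (deriv (deriv c) t).1 (deriv (deriv c) t).2
      (vnorm (deriv c t)) (lam t) (κ t) (Real.cos (β t)) (Real.sin (β t)) (Real.tan (β t))
      _ _ ((deriv γ t).1) ((deriv γ t).2)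
      (hnpos t) (hcbpos t) (hκnn t) hn2 rfl rfl hk2 hpy htb hw1 hw2
    have hrot : vdot (deriv c t) (vrot (π / 2) (deriv γ t)) =
        (deriv c t).1 * (-(deriv γ t).2) + (deriv c t).2 * (deriv γ t).1 := by
      simp [vdot, vrot]
    have hvn : vnorm (deriv γ t) = Real.sqrt ((deriv γ t).1 ^ 2 + (deriv γ t).2 ^ 2) := rfl
    rw [hrot, hvn]
    exact key
end

section
/- Let d : [0,b] → ℝ² be a regular planar directrix curve with curvature κ, β : [0,b] → (-π/2, π/2) smooth, ξ(t) = exp(∫₀ᵗ κ tan β dw), and p(s) = (p_x(s), p_z(s)) a planar profile curve. Then the T-surface parametrization x(s,t) whose first two coordinates are d(t) − ξ(t)(∫₀ᵗ |d'(w)|/ξ(w) dw + p_x(s))·d'(t)/|d'(t)| and third coordinate p_z(s) is a conjugate net: det(x_s, x_t, x_{st}) = 0 for all (s,t) where defined. -/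
open Real

private lemma hasDerivAt_fst' {f : ℝ → ℝ × ℝ} {f' : ℝ × ℝ} {x : ℝ} (h : HasDerivAt f f' x) :
    HasDerivAt (fun t => (f t).1) f'.1 x := by
  simpa using h.hasFDerivAt.fst.hasDerivAt

private lemma hasDerivAt_snd' {f : ℝ → ℝ × ℝ} {f' : ℝ × ℝ} {x : ℝ} (h : HasDerivAt f f' x) :
    HasDerivAt (fun t => (f t).2) f'.2 x := by
  simpa using h.hasFDerivAt.snd.hasDerivAt

/-- The T-surface parametrization `x(s,t)` built from a regular planar directrix `d`
(with curvature `κ`, unit tangent `T`), an angle function `β`, `ξ = exp(∫ κ tan β)` and a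
planar profile `p = (p_x, p_z)` — the first two coordinates being the β-involutes
`d − ξ(∫|d'|/ξ + p_x(s))·d'/|d'|` and the third `p_z(s)` — is a conjugate net:
`det(x_s, x_t, x_{st}) = 0` everywhere. -/
theorem tsurface_is_conjugate_net
    (d : ℝ → ℝ × ℝ) (κ β px pz : ℝ → ℝ)
    (hd : ContDiff ℝ (⊤ : ℕ∞) d) (hκ : Continuous κ) (hβ : ContDiff ℝ (⊤ : ℕ∞) β)
    (hpx : ContDiff ℝ (⊤ : ℕ∞) px) (hpz : ContDiff ℝ (⊤ : ℕ∞) pz)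
    (hreg : ∀ t, deriv d t ≠ 0)
    (hβrange : ∀ t, β t ∈ Set.Ioo (-(π / 2)) (π / 2))
    (T : ℝ → ℝ × ℝ) (hT : ∀ t, T t = (1 / vnorm (deriv d t)) • deriv d t)
    (hfrenet : ∀ t, deriv T t = (κ t * vnorm (deriv d t)) • vrot (π / 2) (T t))
    (ξ : ℝ → ℝ)
    (hξ : ∀ t, ξ t = Real.exp (∫ w in (0:ℝ)..t, κ w * Real.tan (β w)))
    (x : ℝ → ℝ → Fin 3 → ℝ)
    (hx : ∀ s t, x s t =
      ![(d t).1 - ξ t * ((∫ w in (0:ℝ)..t, vnorm (deriv d w) / ξ w) + px s) * (T t).1,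
        (d t).2 - ξ t * ((∫ w in (0:ℝ)..t, vnorm (deriv d w) / ξ w) + px s) * (T t).2,
        pz s]) :
    ∀ s t, Matrix.det (Matrix.of
        ![deriv (fun u => x u t) s, deriv (fun v => x s v) t,
          deriv (fun u => deriv (fun v => x u v) t) s]) = 0 := by
  -- notation
  set G : ℝ → ℝ := fun u => ∫ w in (0:ℝ)..u, vnorm (deriv d w) / ξ w with hG
  -- basic facts about the directrix
  have hdd : Differentiable ℝ d := (contDiff_infty_iff_deriv.mp (hd.of_le (by simp))).1
  have hd' : ContDiff ℝ (⊤ : ℕ∞) (deriv d) := (contDiff_infty_iff_deriv.mp (hd.of_le (by simp))).2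
  have hd'd : Differentiable ℝ (deriv d) := hd'.differentiable (by simp)
  have hsq : ∀ w, 0 < (deriv d w).1 ^ 2 + (deriv d w).2 ^ 2 := by
    intro w
    have h : (deriv d w).1 ≠ 0 ∨ (deriv d w).2 ≠ 0 := by
      by_contra hc; push_neg at hc; exact hreg w (Prod.ext hc.1 hc.2)
    rcases h with h1 | h1
    · nlinarith [sq_nonneg (deriv d w).2, pow_pos (abs_pos.2 h1) 2, sq_abs (deriv d w).1]
    · nlinarith [sq_nonneg (deriv d w).1, pow_pos (abs_pos.2 h1) 2, sq_abs (deriv d w).2]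
  have hnpos : ∀ w, 0 < vnorm (deriv d w) := fun w => Real.sqrt_pos.2 (hsq w)
  have hndiff : Differentiable ℝ (fun w => vnorm (deriv d w)) := by
    intro w
    exact ((Real.hasDerivAt_sqrt (hsq w).ne').comp w
      (((hd'd.fst w).hasDerivAt.pow 2).add ((hd'd.snd w).hasDerivAt.pow 2))).differentiableAt
  have hncont : Continuous (fun w => vnorm (deriv d w)) := hndiff.continuous
  -- T is differentiable
  have hTdiff : Differentiable ℝ T := by
    have : T = fun w => (1 / vnorm (deriv d w)) • deriv d w := funext hT
    rw [this]
    exact ((differentiable_const (1:ℝ)).div hndiff fun w => (hnpos w).ne').smul hd'd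
  -- ξ : positivity, derivative, continuity
  have hξpos : ∀ w, 0 < ξ w := fun w => (hξ w) ▸ Real.exp_pos _
  have htan : Continuous fun w => κ w * Real.tan (β w) :=
    hκ.mul (continuous_iff_continuousAt.2 fun w =>
      (Real.continuousAt_tan.2 (Real.cos_pos_of_mem_Ioo (hβrange w)).ne').comp
        (hβ.continuous.continuousAt))
  have hξder : ∀ w, HasDerivAt ξ (ξ w * (κ w * Real.tan (β w))) w := by
    intro w
    have h1 : HasDerivAt (fun u => ∫ y in (0:ℝ)..u, κ y * Real.tan (β y))
        (κ w * Real.tan (β w)) w := (htan.integral_hasStrictDerivAt 0 w).hasDerivAt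
    have h2 := h1.exp
    have he : (fun u => Real.exp (∫ y in (0:ℝ)..u, κ y * Real.tan (β y))) = ξ :=
      funext fun u => (hξ u).symm
    rw [he] at h2
    rwa [hξ w]
  have hξcont : Continuous ξ := continuous_iff_continuousAt.2 fun w => (hξder w).continuousAt
  -- G
  have hGder : ∀ w, HasDerivAt G (vnorm (deriv d w) / ξ w) w := fun w =>
    (((hncont.div hξcont fun w => (hξpos w).ne')).integral_hasStrictDerivAt 0 w).hasDerivAt
  -- derivative of px
  have hpxd : ∀ u, HasDerivAt px (deriv px u) u := fun u => (hpx.differentiable (by simp) u).hasDerivAt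
  -- row 2 : t-derivative, for all parameters
  have key2 : ∀ u r, HasDerivAt (fun v => x u v)
      (![(deriv d r).1 - ((ξ r * (κ r * Real.tan (β r))) * (G r + px u)
            + ξ r * (vnorm (deriv d r) / ξ r)) * (T r).1 - ξ r * (G r + px u) * (deriv T r).1,
         (deriv d r).2 - ((ξ r * (κ r * Real.tan (β r))) * (G r + px u)
            + ξ r * (vnorm (deriv d r) / ξ r)) * (T r).2 - ξ r * (G r + px u) * (deriv T r).2,
         0]) r := by
    intro u r
    have hxu : (fun v => x u v) = fun v =>
        ![(d v).1 - ξ v * (G v + px u) * (T v).1,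
          (d v).2 - ξ v * (G v + px u) * (T v).2, pz u] := funext fun v => hx u v
    rw [hxu]
    refine hasDerivAt_pi.2 fun i => ?_
    have hA : HasDerivAt (fun v => ξ v * (G v + px u))
        ((ξ r * (κ r * Real.tan (β r))) * (G r + px u) + ξ r * (vnorm (deriv d r) / ξ r)) r :=
      (hξder r).mul ((hGder r).add_const (px u))
    have hTr : HasDerivAt T (deriv T r) r := (hTdiff r).hasDerivAt
    fin_cases i
    · simpa [Pi.sub_def, Pi.mul_def] using (hasDerivAt_fst' (hdd r).hasDerivAt).sub (hA.mul (hasDerivAt_fst' hTr))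
        |>.congr_deriv (by ring)
    · simpa [Pi.sub_def, Pi.mul_def] using (hasDerivAt_snd' (hdd r).hasDerivAt).sub (hA.mul (hasDerivAt_snd' hTr))
        |>.congr_deriv (by ring)
    · simpa using hasDerivAt_const r (pz u)
  have hrow2 : ∀ u r, deriv (fun v => x u v) r =
      ![(deriv d r).1 - ((ξ r * (κ r * Real.tan (β r))) * (G r + px u)
            + ξ r * (vnorm (deriv d r) / ξ r)) * (T r).1 - ξ r * (G r + px u) * (deriv T r).1,
         (deriv d r).2 - ((ξ r * (κ r * Real.tan (β r))) * (G r + px u)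
            + ξ r * (vnorm (deriv d r) / ξ r)) * (T r).2 - ξ r * (G r + px u) * (deriv T r).2,
         0] := fun u r => (key2 u r).deriv
  intro s t
  -- row 3 : s-derivative of row 2
  have key3 : HasDerivAt (fun u => deriv (fun v => x u v) t)
      (![-(deriv px s) * ((ξ t * (κ t * Real.tan (β t))) * (T t).1 + ξ t * (deriv T t).1),
         -(deriv px s) * ((ξ t * (κ t * Real.tan (β t))) * (T t).2 + ξ t * (deriv T t).2),
         0]) s := by
    have h : (fun u => deriv (fun v => x u v) t) = fun u =>
      ![(deriv d t).1 - ((ξ t * (κ t * Real.tan (β t))) * (G t + px u)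
            + ξ t * (vnorm (deriv d t) / ξ t)) * (T t).1 - ξ t * (G t + px u) * (deriv T t).1,
         (deriv d t).2 - ((ξ t * (κ t * Real.tan (β t))) * (G t + px u)
            + ξ t * (vnorm (deriv d t) / ξ t)) * (T t).2 - ξ t * (G t + px u) * (deriv T t).2,
         0] := funext fun u => hrow2 u t
    rw [h]
    refine hasDerivAt_pi.2 fun i => ?_
    have hGpx : HasDerivAt (fun u => G t + px u) (deriv px s) s := (hpxd s).const_add (G t)
    fin_cases i
    · simpa [Pi.sub_def, Pi.mul_def] using ((hasDerivAt_const s (deriv d t).1).sub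
        ((((hGpx.const_mul (ξ t * (κ t * Real.tan (β t)))).add_const
            (ξ t * (vnorm (deriv d t) / ξ t))).mul_const (T t).1))).sub
        ((hGpx.const_mul (ξ t)).mul_const (deriv T t).1) |>.congr_deriv (by ring)
    · simpa [Pi.sub_def, Pi.mul_def] using ((hasDerivAt_const s (deriv d t).2).sub
        ((((hGpx.const_mul (ξ t * (κ t * Real.tan (β t)))).add_const
            (ξ t * (vnorm (deriv d t) / ξ t))).mul_const (T t).2))).sub
        ((hGpx.const_mul (ξ t)).mul_const (deriv T t).2) |>.congr_deriv (by ring)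
    · simpa using hasDerivAt_const s (0:ℝ)
  have hrow3 := key3.deriv
  -- relation d' = n • T in coordinates
  have hT1 : (deriv d t).1 = vnorm (deriv d t) * (T t).1 := by
    rw [hT t]; simp only [Prod.smul_fst, smul_eq_mul]; field_simp [Prod.smul_def, (hnpos t).ne']
  have hT2 : (deriv d t).2 = vnorm (deriv d t) * (T t).2 := by
    rw [hT t]; simp only [Prod.smul_snd, smul_eq_mul]; field_simp [Prod.smul_def, (hnpos t).ne']
  rw [Matrix.det_fin_three]
  simp only [Matrix.of_apply, Matrix.cons_val', Matrix.cons_val_zero, Matrix.cons_val_one,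
    Matrix.head_cons, Matrix.empty_val', Matrix.cons_val_fin_one, Matrix.head_fin_const,
    Matrix.cons_val_two, Matrix.tail_cons]
  rw [hrow2 s t, hrow3, hT1, hT2]
  have hξt := (hξpos t).ne'
  simp only [Matrix.cons_val_zero, Matrix.cons_val_one, Matrix.head_cons, Matrix.cons_val_two,
    Matrix.tail_cons]
  field_simp
  ring
end
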